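/- Let G be a connected chordal claw-free graph with clique tree T_G, and let B be a fork clique. Then every neighbor of B in T_G is a star clique. -/

import Mathlib

open SimpleGraph

/-- A graph is *chordal* if every cycle of length at least 4 has a chord, i.e. an
edge of the graph joining two vertices of the cycle that is not an edge of the cycle. -/
def IsChordal {V : Type*} (G : SimpleGraph V) : Prop :=
  ∀ (v : V) (c : G.Walk v v), c.IsCycle → 4 ≤ c.length →
    ∃ u w : V, u ∈ c.support ∧ w ∈ c.support ∧ G.Adj u w ∧ s(u, w) ∉ c.edges

/-- A graph is *claw-free* if it has no induced subgraph isomorphic to the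
complete bipartite graph `K_{1,3}`. -/
def ClawFree {V : Type*} (G : SimpleGraph V) : Prop :=
  IsEmpty (completeBipartiteGraph (Fin 1) (Fin 3) ↪g G)

/-- A *max clique* of `G` is a maximal clique. -/
def IsMaximalClique {V : Type*} (G : SimpleGraph V) (s : Set V) : Prop :=
  G.IsClique s ∧ ∀ t : Set V, G.IsClique t → s ⊆ t → s = t

/-- The type of max cliques of `G`. -/
abbrev MaxClique {V : Type*} (G : SimpleGraph V) : Type _ :=
  {s : Set V // IsMaximalClique G s}

/-- `M_v`: the set of max cliques of `G` containing the vertex `v`. -/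
def cliquesOf {V : Type*} (G : SimpleGraph V) (v : V) : Set (MaxClique G) :=
  {A | v ∈ A.1}

/-- A *clique tree* of `G`: a tree whose vertices are the max cliques of `G` such
that for every vertex `v` of `G` the subgraph induced by `M_v` is connected. -/
structure IsCliqueTree {V : Type*} (G : SimpleGraph V)
    (T : SimpleGraph (MaxClique G)) : Prop where
  isTree : T.IsTree
  induced_connected : ∀ v : V, (T.induce (cliquesOf G v)).Connected

/-- The subgraph of `T` induced by `S` is a path in `T`: there is a path of `T`
whose vertices are exactly `S` and whose edges are exactly the edges of `T`
between vertices of `S`. -/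
def InducedPath {M : Type*} (T : SimpleGraph M) (S : Set M) : Prop :=
  ∃ (a b : M) (p : T.Walk a b), p.IsPath ∧ (∀ A, A ∈ p.support ↔ A ∈ S) ∧
    ∀ A B, A ∈ S → B ∈ S → (T.Adj A B ↔ s(A, B) ∈ p.edges)

/-- `B` is a *star clique*: every vertex of `B` is contained in at most one
neighbor of `B` in the clique tree `T`. -/
def IsStarClique {V : Type*} (G : SimpleGraph V) (T : SimpleGraph (MaxClique G))
    (B : MaxClique G) : Prop :=
  ∀ v ∈ B.1, ∀ A A' : MaxClique G, T.Adj B A → T.Adj B A' →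
    v ∈ A.1 → v ∈ A'.1 → A = A'

/-- `B` is a *fork clique*: `B` has degree 3 in the clique tree `T`, for every
vertex `v ∈ B` there are two distinct neighbors `A, A'` of `B` with
`M_v = {B, A, A'}`, and for all distinct neighbors `A, A'` of `B` there is a
vertex `v` with `M_v = {B, A, A'}`. -/
def IsForkClique {V : Type*} (G : SimpleGraph V) (T : SimpleGraph (MaxClique G))
    (B : MaxClique G) : Prop :=
  (T.neighborSet B).ncard = 3 ∧
  (∀ v ∈ B.1, ∃ A A' : MaxClique G, A ≠ A' ∧ T.Adj B A ∧ T.Adj B A' ∧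
      cliquesOf G v = {B, A, A'}) ∧
  ∀ A A' : MaxClique G, T.Adj B A → T.Adj B A' → A ≠ A' →
      ∃ v : V, cliquesOf G v = {B, A, A'}

/-- The paths `T[S₁]` and `T[S₂]` *fork in `A`*: there is a fork
`(A', A, {A_P, A_Q})`, i.e. `A', A, A_P` are consecutive vertices of the path
`T[S₁]`, `A', A, A_Q` are consecutive vertices of the path `T[S₂]`,
`A_P` does not occur in `T[S₂]` and `A_Q` does not occur in `T[S₁]`. -/
def ForkAt {M : Type*} (T : SimpleGraph M) (S₁ S₂ : Set M) (A : M) : Prop :=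
  ∃ A' AP AQ : M, A' ∈ S₁ ∧ A' ∈ S₂ ∧ A ∈ S₁ ∧ A ∈ S₂ ∧ AP ∈ S₁ ∧ AQ ∈ S₂ ∧
    T.Adj A' A ∧ T.Adj A AP ∧ T.Adj A AQ ∧ A' ≠ AP ∧ A' ≠ AQ ∧ AP ∉ S₂ ∧ AQ ∉ S₁

/-- `A₁, A₂, A₃` form a *fork triangle* around `B`. -/
def FormsForkTriangle {V : Type*} (G : SimpleGraph V) (T : SimpleGraph (MaxClique G))
    (A₁ A₂ A₃ B : MaxClique G) : Prop :=
  A₁ ≠ A₂ ∧ A₁ ≠ A₃ ∧ A₂ ≠ A₃ ∧ T.Adj B A₁ ∧ T.Adj B A₂ ∧ T.Adj B A₃ ∧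
  (∃ u : V, cliquesOf G u = {A₁, B, A₂}) ∧
  (∃ v : V, cliquesOf G v = {A₂, B, A₃}) ∧
  (∃ w : V, cliquesOf G w = {A₃, B, A₁})

/-- `B` has a fork triangle. -/
def HasForkTriangle {V : Type*} (G : SimpleGraph V) (T : SimpleGraph (MaxClique G))
    (B : MaxClique G) : Prop :=
  ∃ A₁ A₂ A₃ : MaxClique G, FormsForkTriangle G T A₁ A₂ A₃ B

/-- In the tree `T` rooted at `R`, `B` is an ancestor of `A` (equivalently, `A` is
a descendant of `B`): `B` lies on the unique path from `R` to `A`.  Every vertex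
is an ancestor/descendant of itself. -/
def IsAncestor {M : Type*} (T : SimpleGraph M) (R A B : M) : Prop :=
  ∀ p : T.Walk R A, p.IsPath → B ∈ p.support

/-- In the tree `T` rooted at `R`, `A` is a child of `P`. -/
def IsChildOf {M : Type*} (T : SimpleGraph M) (R A P : M) : Prop :=
  T.Adj P A ∧ IsAncestor T R A P

/-- `R` is a leaf of `T`: it has exactly one neighbor. -/
def IsLeaf {M : Type*} (T : SimpleGraph M) (R : M) : Prop :=
  (T.neighborSet R).ncard = 1

/-- The triple `(v₁, v₂, v₃)` *spans* the max clique `A`: `A` is the only max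
clique of `G` containing `v₁`, `v₂` and `v₃`. -/
def Spans {V : Type*} (G : SimpleGraph V) (v₁ v₂ v₃ : V) (A : Set V) : Prop :=
  IsMaximalClique G A ∧ v₁ ∈ A ∧ v₂ ∈ A ∧ v₃ ∈ A ∧
    ∀ B : Set V, IsMaximalClique G B → v₁ ∈ B → v₂ ∈ B → v₃ ∈ B → B = A

section AuxLemmas

/-- In an acyclic graph, if `C` and `C'` are distinct neighbors of `A`, then every
walk from `C` to `C'` passes through `A`. -/
private lemma sep_lemma {M : Type*} {T : SimpleGraph M} (hT : T.IsAcyclic)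
    {A C C' : M} (h1 : T.Adj A C) (h2 : T.Adj A C') (hne : C ≠ C')
    {p : T.Walk C C'} (hp : A ∉ p.support) : False := by
  have hb := (SimpleGraph.isAcyclic_iff_forall_adj_isBridge.mp hT) h1
  rw [SimpleGraph.isBridge_iff_adj_and_forall_walk_mem_edges] at hb
  have hmem := hb (SimpleGraph.Walk.cons h2 p.reverse)
  rw [SimpleGraph.Walk.edges_cons, List.mem_cons] at hmem
  rcases hmem with h | h
  · rw [Sym2.eq_iff] at h
    rcases h with ⟨-, h⟩ | ⟨-, h⟩
    · exact hne h
    · exact h1.ne h.symm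
  · have := SimpleGraph.Walk.fst_mem_support_of_mem_edges p.reverse h
    rw [SimpleGraph.Walk.support_reverse, List.mem_reverse] at this
    exact hp this

/-- From the connectedness of the induced subgraph on `M_x`, get a walk between two
max cliques containing `x` whose support consists of max cliques containing `x`. -/
private lemma walk_in_cliques {V : Type*} {G : SimpleGraph V} {T : SimpleGraph (MaxClique G)}
    (hT : IsCliqueTree G T) (x : V) {C D : MaxClique G}
    (hC : x ∈ C.1) (hD : x ∈ D.1) :
    ∃ p : T.Walk C D, ∀ X ∈ p.support, x ∈ X.1 := by
  obtain ⟨q⟩ := (hT.induced_connected x).preconnected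
    ⟨C, (hC : C ∈ cliquesOf G x)⟩ ⟨D, (hD : D ∈ cliquesOf G x)⟩
  let f : T.induce (cliquesOf G x) →g T := ⟨Subtype.val, fun h => h⟩
  refine ⟨q.map f, ?_⟩
  intro X hX
  rw [SimpleGraph.Walk.support_map, List.mem_map] at hX
  obtain ⟨Y, -, rfl⟩ := hX
  exact Y.2

/-- Every clique extends to a maximal clique. -/
private lemma exists_maxClique_superset {V : Type*} (G : SimpleGraph V) {s : Set V}
    (hs : G.IsClique s) : ∃ t : Set V, IsMaximalClique G t ∧ s ⊆ t := by
  have key : ∃ m, s ⊆ m ∧ Maximal (· ∈ {t : Set V | G.IsClique t}) m := by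
    apply zorn_subset_nonempty _ ?_ s hs
    intro c hcS hchain _
    refine ⟨⋃₀ c, ?_, fun t ht => Set.subset_sUnion_of_mem ht⟩
    intro a ha b hb hab
    obtain ⟨ta, hta, hata⟩ := ha
    obtain ⟨tb, htb, hbtb⟩ := hb
    rcases hchain.total hta htb with h | h
    · exact hcS htb (h hata) hbtb hab
    · exact hcS hta hata (h hbtb) hab
  obtain ⟨m, hsm, hm⟩ := key
  exact ⟨m, ⟨hm.1, fun t ht hmt => Set.Subset.antisymm hmt (hm.2 ht hmt)⟩, hsm⟩

/-- Two distinct max cliques are not contained in one another. -/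
private lemma exists_not_mem_of_ne {V : Type*} {G : SimpleGraph V}
    (C A : MaxClique G) (h : C ≠ A) : ∃ c, c ∈ C.1 ∧ c ∉ A.1 := by
  by_contra hc
  push_neg at hc
  exact h (Subtype.ext (C.2.2 A.1 A.2.1 fun x hx => hc x hx))

/-- A claw embedding from explicit data. -/
private lemma claw_of {V : Type*} {G : SimpleGraph V} {v c1 c2 c3 : V}
    (h1 : G.Adj v c1) (h2 : G.Adj v c2) (h3 : G.Adj v c3)
    (n12 : ¬G.Adj c1 c2) (n13 : ¬G.Adj c1 c3) (n23 : ¬G.Adj c2 c3)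
    (d12 : c1 ≠ c2) (d13 : c1 ≠ c3) (d23 : c2 ≠ c3) :
    Nonempty (completeBipartiteGraph (Fin 1) (Fin 3) ↪g G) := by
  refine ⟨⟨⟨Sum.elim (fun _ => v) ![c1, c2, c3], ?_⟩, ?_⟩⟩
  · rintro (a | a) (b | b) h <;> simp only [Sum.elim_inl, Sum.elim_inr] at h
    · exact congrArg Sum.inl (Subsingleton.elim a b)
    · exfalso
      fin_cases b <;> [exact h1.ne h; exact h2.ne h; exact h3.ne h]
    · exfalso
      fin_cases a <;> [exact h1.ne h.symm; exact h2.ne h.symm; exact h3.ne h.symm]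
    · congr 1
      fin_cases a <;> fin_cases b <;>
        first
          | rfl
          | exact absurd h d12 | exact absurd h.symm d12
          | exact absurd h d13 | exact absurd h.symm d13
          | exact absurd h d23 | exact absurd h.symm d23
  · rintro (a | a) (b | b)
    · constructor
      · intro h
        exact absurd h (G.irrefl)
      · rintro (⟨-, h⟩ | ⟨h, -⟩) <;> simp at h
    · constructor
      · intro _
        exact Or.inl ⟨rfl, rfl⟩
      · intro _
        show G.Adj v _
        fin_cases b <;> [exact h1; exact h2; exact h3]
    · constructor
      · intro _
        exact Or.inr ⟨rfl, rfl⟩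
      · intro _
        show G.Adj _ v
        fin_cases a <;> [exact h1.symm; exact h2.symm; exact h3.symm]
    · constructor
      · intro h
        exfalso
        fin_cases a <;> fin_cases b <;>
          first
            | exact G.irrefl h
            | exact n12 h | exact n12 h.symm
            | exact n13 h | exact n13 h.symm
            | exact n23 h | exact n23 h.symm
      · rintro (⟨h, -⟩ | ⟨-, h⟩) <;> simp at h

end AuxLemmas

/-- Let `G` be a connected chordal claw-free graph with clique
tree `T`, and `B` a fork clique.  Then every neighbor of `B` in `T` is a star
clique. -/
theorem forkClique_neighbors_star {V : Type*} [Fintype V] [Nonempty V]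
    (G : SimpleGraph V) (hconn : G.Connected) (hch : IsChordal G)
    (hcf : ClawFree G) (T : SimpleGraph (MaxClique G)) (hT : IsCliqueTree G T)
    (B : MaxClique G) (hB : IsForkClique G T B)
    (A : MaxClique G) (hAdj : T.Adj B A) :
    IsStarClique G T A := by
  obtain ⟨hdeg, hforkv, hforkn⟩ := hB
  have hacyc := hT.isTree.IsAcyclic
  intro v hvA C C' hAC hAC' hvC hvC'
  by_contra hne
  -- Case: C = B
  rcases eq_or_ne C B with hCB | hCB
  · subst hCB
    obtain ⟨A1, A2, h12, hBA1, hBA2, hMv⟩ := hforkv v hvC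
    have hC'mem : C' ∈ cliquesOf G v := hvC'
    rw [hMv, Set.mem_insert_iff, Set.mem_insert_iff, Set.mem_singleton_iff] at hC'mem
    have hBC' : T.Adj C C' := by
      rcases hC'mem with h | h | h
      · exact absurd h (Ne.symm hne)
      · exact h ▸ hBA1
      · exact h ▸ hBA2
    refine sep_lemma hacyc hAC.symm hBC' hAC'.ne
      (p := SimpleGraph.Walk.cons hAC' SimpleGraph.Walk.nil) ?_
    simp only [SimpleGraph.Walk.support_cons, SimpleGraph.Walk.support_nil,
      List.mem_cons, List.mem_singleton]
    push_neg
    exact ⟨hAC.ne', hBC'.ne, List.not_mem_nil⟩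
  rcases eq_or_ne C' B with hC'B | hC'B
  · subst hC'B
    obtain ⟨A1, A2, h12, hBA1, hBA2, hMv⟩ := hforkv v hvC'
    have hCmem : C ∈ cliquesOf G v := hvC
    rw [hMv, Set.mem_insert_iff, Set.mem_insert_iff, Set.mem_singleton_iff] at hCmem
    have hBC : T.Adj C' C := by
      rcases hCmem with h | h | h
      · exact absurd h hne
      · exact h ▸ hBA1
      · exact h ▸ hBA2
    refine sep_lemma hacyc hAC'.symm hBC hAC.ne
      (p := SimpleGraph.Walk.cons hAC SimpleGraph.Walk.nil) ?_
    simp only [SimpleGraph.Walk.support_cons, SimpleGraph.Walk.support_nil,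
      List.mem_cons, List.mem_singleton]
    push_neg
    exact ⟨hAC'.ne', hBC.ne, List.not_mem_nil⟩
  -- Main case: C ≠ B and C' ≠ B
  obtain ⟨c, hcC, hcA⟩ := exists_not_mem_of_ne C A hAC.ne'
  obtain ⟨c', hc'C', hc'A⟩ := exists_not_mem_of_ne C' A hAC'.ne'
  obtain ⟨A2, hA2mem, hA2ne⟩ :=
    Set.exists_ne_of_one_lt_ncard (by rw [hdeg]; norm_num) A
  have hBA2 : T.Adj B A2 := hA2mem
  obtain ⟨u, hMu⟩ := hforkn A A2 hAdj hBA2 hA2ne.symm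
  have huA : u ∈ A.1 := by
    have : A ∈ cliquesOf G u := by rw [hMu]; simp
    exact this
  have huB : u ∈ B.1 := by
    have : B ∈ cliquesOf G u := by rw [hMu]; simp
    exact this
  -- v ≠ u
  have hvu : v ≠ u := by
    rintro rfl
    have hC : C ∈ cliquesOf G v := hvC
    have hC' : C' ∈ cliquesOf G v := hvC'
    rw [hMu, Set.mem_insert_iff, Set.mem_insert_iff, Set.mem_singleton_iff] at hC hC'
    have hCA2 : C = A2 := by
      rcases hC with h | h | h
      · exact absurd h hCB
      · exact absurd h hAC.ne'
      · exact h
    have hC'A2 : C' = A2 := by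
      rcases hC' with h | h | h
      · exact absurd h hC'B
      · exact absurd h hAC'.ne'
      · exact h
    exact hne (hCA2.trans hC'A2.symm)
  -- c ≠ c'
  have hcc' : c ≠ c' := by
    rintro rfl
    obtain ⟨p, hp⟩ := walk_in_cliques hT c hcC hc'C'
    exact sep_lemma hacyc hAC hAC' hne (fun hmem => hcA (hp A hmem))
  -- adjacencies with the center v
  have hvc : G.Adj v c := C.2.1 hvC hcC (by rintro rfl; exact hcA hvA)
  have hvc' : G.Adj v c' := C'.2.1 hvC' hc'C' (by rintro rfl; exact hc'A hvA)
  have hvu' : G.Adj v u := A.2.1 hvA huA hvu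
  -- non-adjacency of c and c'
  have hncc' : ¬ G.Adj c c' := by
    intro hadj
    obtain ⟨D0, hD0max, hsub⟩ := exists_maxClique_superset G
      (SimpleGraph.isClique_pair.mpr fun _ => hadj)
    set D : MaxClique G := ⟨D0, hD0max⟩
    have hcD : c ∈ D.1 := hsub (Set.mem_insert _ _)
    have hc'D : c' ∈ D.1 := hsub (Set.mem_insert_of_mem _ rfl)
    obtain ⟨p1, hp1⟩ := walk_in_cliques hT c hcC hcD
    obtain ⟨p2, hp2⟩ := walk_in_cliques hT c' hc'D hc'C'
    refine sep_lemma hacyc hAC hAC' hne (p := p1.append p2) ?_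
    rw [SimpleGraph.Walk.mem_support_append_iff]
    rintro (h | h)
    · exact hcA (hp1 A h)
    · exact hc'A (hp2 A h)
  -- a walk from a clique containing `x ∈ D ∩ X` (D ∈ {B, A2}) to B avoiding A
  have reach_B : ∀ (x : V) (X : MaxClique G), x ∈ X.1 → x ∉ A.1 →
      (x ∈ B.1 ∨ x ∈ A2.1) → ∃ q : T.Walk X B, A ∉ q.support := by
    intro x X hxX hxA hD
    rcases hD with hxB | hxA2
    · obtain ⟨p, hp⟩ := walk_in_cliques hT x hxX hxB
      exact ⟨p, fun hmem => hxA (hp A hmem)⟩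
    · obtain ⟨p, hp⟩ := walk_in_cliques hT x hxX hxA2
      refine ⟨p.append (SimpleGraph.Walk.cons hBA2.symm SimpleGraph.Walk.nil), ?_⟩
      rw [SimpleGraph.Walk.mem_support_append_iff]
      rintro (h | h)
      · exact hxA (hp A h)
      · simp only [SimpleGraph.Walk.support_cons, SimpleGraph.Walk.support_nil,
          List.mem_cons, List.mem_singleton] at h
        rcases h with h | h | h
        · exact hA2ne h.symm
        · exact hAdj.ne' h
        · exact absurd h List.not_mem_nil
  -- non-adjacency of c and u
  have hncu : ¬ G.Adj c u := by
    intro hadj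
    obtain ⟨D0, hD0max, hsub⟩ := exists_maxClique_superset G
      (SimpleGraph.isClique_pair.mpr fun _ => hadj)
    set D : MaxClique G := ⟨D0, hD0max⟩
    have hcD : c ∈ D.1 := hsub (Set.mem_insert _ _)
    have huD : u ∈ D.1 := hsub (Set.mem_insert_of_mem _ rfl)
    have hDmem : D ∈ cliquesOf G u := huD
    rw [hMu, Set.mem_insert_iff, Set.mem_insert_iff, Set.mem_singleton_iff] at hDmem
    have hkey : c ∈ B.1 ∨ c ∈ A2.1 := by
      rcases hDmem with h | h | h
      · exact Or.inl (h ▸ hcD)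
      · exact absurd (h ▸ hcD) hcA
      · exact Or.inr (h ▸ hcD)
    obtain ⟨q, hq⟩ := reach_B c C hcC hcA hkey
    exact sep_lemma hacyc hAC hAdj.symm hCB hq
  -- non-adjacency of c' and u
  have hnc'u : ¬ G.Adj c' u := by
    intro hadj
    obtain ⟨D0, hD0max, hsub⟩ := exists_maxClique_superset G
      (SimpleGraph.isClique_pair.mpr fun _ => hadj)
    set D : MaxClique G := ⟨D0, hD0max⟩
    have hc'D : c' ∈ D.1 := hsub (Set.mem_insert _ _)
    have huD : u ∈ D.1 := hsub (Set.mem_insert_of_mem _ rfl)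
    have hDmem : D ∈ cliquesOf G u := huD
    rw [hMu, Set.mem_insert_iff, Set.mem_insert_iff, Set.mem_singleton_iff] at hDmem
    have hkey : c' ∈ B.1 ∨ c' ∈ A2.1 := by
      rcases hDmem with h | h | h
      · exact Or.inl (h ▸ hc'D)
      · exact absurd (h ▸ hc'D) hc'A
      · exact Or.inr (h ▸ hc'D)
    obtain ⟨q, hq⟩ := reach_B c' C' hc'C' hc'A hkey
    exact sep_lemma hacyc hAC' hAdj.symm hC'B hq
  -- build a claw with center v and leaves c, c', u
  have hcu : c ≠ u := fun h => hcA (h ▸ huA)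
  have hc'u : c' ≠ u := fun h => hc'A (h ▸ huA)
  exact hcf.false (claw_of hvc hvc' hvu' hncc' hncu hnc'u hcc' hcu hc'u).some
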